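/- Let S = {S_Q}_Q be a generator family of w_F, indexed by the proper subgroups Q of P. For every F-essential subgroup Q of P there exists φ ∈ F(P,Q) such that S_{φ(Q)} contains an F-irreducible element, i.e. an element of w_F(φ(Q)) \ r_F(φ(Q)). -/

import Mathlib

namespace Puig

variable {G : Type*} [Group G]

/-- The conjugation morphism `x ↦ u x u⁻¹` from `R` to `Q`. -/
def conjMap {Q R : Subgroup G} (u : G) (h : ∀ x ∈ R, u * x * u⁻¹ ∈ Q) : ↥R →* ↥Q where
  toFun x := ⟨u * x * u⁻¹, h x x.2⟩
  map_one' := by ext; simp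
  map_mul' x y := by ext; simp

/-- The data of a `P`-category: a set of morphisms for each pair of subgroups. -/
structure PCat (G : Type*) [Group G] where
  Hom : ∀ _Q _R : Subgroup G, Set (↥_R →* ↥_Q)

/-- `F` is a divisible `P`-category. -/
structure PCat.IsDivisible (F : PCat G) : Prop where
  inj : ∀ ⦃Q R : Subgroup G⦄ ⦃φ : ↥R →* ↥Q⦄, φ ∈ F.Hom Q R → Function.Injective φ
  conj_mem : ∀ ⦃Q R : Subgroup G⦄ (u : G) (h : ∀ x ∈ R, u * x * u⁻¹ ∈ Q),
    conjMap u h ∈ F.Hom Q R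
  comp_mem : ∀ ⦃Q R T : Subgroup G⦄ ⦃φ : ↥R →* ↥Q⦄ ⦃ψ : ↥T →* ↥R⦄,
    φ ∈ F.Hom Q R → ψ ∈ F.Hom R T → φ.comp ψ ∈ F.Hom Q T
  div : ∀ ⦃Q R T : Subgroup G⦄ ⦃φ : ↥R →* ↥Q⦄ (ψ : ↥T →* ↥R), φ ∈ F.Hom Q R →
    (φ.comp ψ ∈ F.Hom Q T ↔ ψ ∈ F.Hom R T)

/-- The image `φ(Q) ≤ G` of a morphism `φ : Q → R` between subgroups of `G`. -/
def img {Q R : Subgroup G} (φ : ↥Q →* ↥R) : Subgroup G := φ.range.map R.subtype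

/-- The corestriction `Q → φ(Q)` of a morphism `φ`. -/
def toImg {Q R : Subgroup G} (φ : ↥Q →* ↥R) : ↥Q →* ↥(img φ) where
  toFun x := ⟨(φ x : G), Subgroup.mem_map_of_mem R.subtype ⟨x, rfl⟩⟩
  map_one' := by ext; simp
  map_mul' x y := by ext; simp

/-- Restriction of a morphism along an inclusion of subgroups. -/
def restrHom {A B C : Subgroup G} (ψ : ↥A →* ↥C) (h : B ≤ A) : ↥B →* ↥C :=
  ψ.comp (Subgroup.inclusion h)

/-- The inclusion morphism `ι_A^P : A → P`. -/
def inclP (A : Subgroup G) : ↥A →* ↥(⊤ : Subgroup G) := Subgroup.inclusion le_top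

/-- The automorphism of `Q` induced by conjugation by `u ∈ N_G(Q)`. -/
def conjAut (Q : Subgroup G) (u : ↥(Subgroup.normalizer (Q : Set G))) : MulAut ↥Q where
  toFun x := ⟨(u : G) * x * (u : G)⁻¹, (Subgroup.mem_normalizer_iff.mp u.2 x).mp x.2⟩
  invFun x := ⟨(u : G)⁻¹ * x * (u : G),
    (Subgroup.mem_normalizer_iff.mp u.2 ((u : G)⁻¹ * x * (u : G))).mpr
      (by simpa [mul_assoc] using x.2)⟩
  left_inv x := by ext; simp [mul_assoc]
  right_inv x := by ext; simp [mul_assoc]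
  map_mul' x y := by ext; simp

/-- The homomorphism `N_G(Q) → Aut(Q)` given by conjugation. -/
def conjHomN (Q : Subgroup G) : ↥(Subgroup.normalizer (Q : Set G)) →* MulAut ↥Q where
  toFun := conjAut Q
  map_one' := by ext x; simp [conjAut]
  map_mul' u v := by ext x; simp [conjAut, mul_assoc]

/-- `F_R(Q)`: the group of automorphisms of `Q` induced by conjugation by elements of `R`. -/
def conjF (R Q : Subgroup G) : Subgroup (MulAut ↥Q) :=
  (R.subgroupOf (Subgroup.normalizer (Q : Set G))).map (conjHomN Q)

/-- `F(Q)`: the group of `F`-automorphisms of `Q`. -/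
def FAut (F : PCat G) (Q : Subgroup G) : Subgroup (MulAut ↥Q) :=
  Subgroup.closure {α : MulAut ↥Q | α.toMonoidHom ∈ F.Hom Q Q}

/-- `O_p(G)`: the largest normal `p`-subgroup of `G`. -/
def pCore (p : ℕ) (G : Type*) [Group G] : Subgroup G :=
  sSup {H : Subgroup G | H.Normal ∧ IsPGroup p ↥H}

/-- `N_P^K(Q)`. -/
def NPK (Q : Subgroup G) (K : Subgroup (MulAut ↥Q)) : Subgroup G :=
  (K.comap (conjHomN Q)).map (Subgroup.normalizer (Q : Set G)).subtype

/-- `^φK`: the image of `K ≤ Aut Q` in `Aut (φ(Q))` under the isomorphism induced by `φ`. -/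
def pushK {Q R : Subgroup G} (φ : ↥Q →* ↥R) (K : Subgroup (MulAut ↥Q)) :
    Subgroup (MulAut ↥(img φ)) :=
  Subgroup.closure {β | ∃ α ∈ K, ∀ x : ↥Q, β (toImg φ x) = toImg φ (α x)}

/-- `φ*K'`: the pull-back of `K' ≤ Aut (φ(Q))` to `Aut Q` under the isomorphism induced by `φ`. -/
def pullK {Q R : Subgroup G} (φ : ↥Q →* ↥R) (K' : Subgroup (MulAut ↥(img φ))) :
    Subgroup (MulAut ↥Q) :=
  Subgroup.closure {α | ∃ β ∈ K', ∀ x : ↥Q, toImg φ (α x) = β (toImg φ x)}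

/-- `Q` is fully `K`-normalized in `F`. -/
def FullyKNormalized (F : PCat G) (Q : Subgroup G) (K : Subgroup (MulAut ↥Q)) : Prop :=
  ∀ ψ ∈ F.Hom ⊤ (Q ⊔ NPK Q K),
    img (restrHom ψ le_sup_right) =
      NPK (img (restrHom ψ le_sup_left)) (pushK (restrHom ψ le_sup_left) K)

/-- The triple `(Q, K, φ)` is extensile in `F`. -/
def Extensile (F : PCat G) (Q : Subgroup G) (K : Subgroup (MulAut ↥Q))
    (φ : ↥Q →* ↥(⊤ : Subgroup G)) : Prop :=
  ∃ ψ ∈ F.Hom ⊤ (Q ⊔ NPK Q K), ∃ χ : MulAut ↥Q, χ ∈ K ∧ χ.toMonoidHom ∈ F.Hom Q Q ∧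
    ∀ u : ↥Q, restrHom ψ le_sup_left u = φ (χ u)

/-- The Sylow condition: `F_P(P)` is a Sylow `p`-subgroup of `F(P)`. -/
def SylowCond (p : ℕ) (F : PCat G) : Prop :=
  ∃ S : Sylow p ↥(FAut F (⊤ : Subgroup G)),
    (S : Subgroup ↥(FAut F (⊤ : Subgroup G))) =
      (conjF (⊤ : Subgroup G) (⊤ : Subgroup G)).subgroupOf (FAut F (⊤ : Subgroup G))

/-- The extension condition for a Frobenius `P`-category. -/
def ExtensionCond (F : PCat G) : Prop :=
  ∀ (Q : Subgroup G) (K : Subgroup (MulAut ↥Q)) (φ : ↥Q →* ↥(⊤ : Subgroup G)),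
    φ ∈ F.Hom ⊤ Q → FullyKNormalized F (img φ) (pushK φ K) → Extensile F Q K φ

/-- `F` is a Frobenius `P`-category. -/
def IsFrobenius (p : ℕ) (F : PCat G) : Prop :=
  F.IsDivisible ∧ SylowCond p F ∧ ExtensionCond F

/-- The free ℤ-module on all morphisms from `R` to `Q`. -/
abbrev Zmod (Q R : Subgroup G) : Type _ := (↥R →* ↥Q) →₀ ℤ

/-- Bilinear composition on the free ℤ-modules of morphisms. -/
noncomputable def dcomp {Q R T : Subgroup G} (a : Zmod Q R) (b : Zmod R T) : Zmod Q T :=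
  a.sum fun φ m => b.sum fun ψ n => Finsupp.single (φ.comp ψ) (m * n)

/-- `ℤF(Q,R)`: the free ℤ-module with basis `F(Q,R)`. -/
noncomputable def ZF (F : PCat G) (Q R : Subgroup G) : Submodule ℤ (Zmod Q R) :=
  Finsupp.supported ℤ ℤ (F.Hom Q R)

/-- `w_F(Q)`: the kernel of the augmentation `ℤF(P,Q) → ℤ`. -/
noncomputable def wF (F : PCat G) (Q : Subgroup G) : Submodule ℤ (Zmod (⊤ : Subgroup G) Q) :=
  ZF F ⊤ Q ⊓ LinearMap.ker (Finsupp.linearCombination ℤ fun _ => (1 : ℤ))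

/-- `r_F(Q) = w_F(P)∘ℤF(P,Q) + Σ_{|R|>|Q|} w_F(R)∘ℤF(R,Q)`. -/
noncomputable def rF (F : PCat G) (Q : Subgroup G) : Submodule ℤ (Zmod (⊤ : Subgroup G) Q) :=
  Submodule.span ℤ {x | ∃ R : Subgroup G, (R = ⊤ ∨ Nat.card ↥Q < Nat.card ↥R) ∧
    ∃ a ∈ wF F R, ∃ b ∈ ZF F R Q, x = dcomp a b}

/-- `Q` is `F`-essential. -/
def IsEssential (F : PCat G) (Q : Subgroup G) : Prop := rF F Q ≠ wF F Q

/-- `Q` is `F`-selfcentralizing. -/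
def SelfCentralizing (F : PCat G) (Q : Subgroup G) : Prop :=
  ∀ φ ∈ F.Hom (⊤ : Subgroup G) Q,
    Subgroup.centralizer (img φ : Set G) = (Subgroup.center ↥(img φ)).map (img φ).subtype

/-- `Q` is `F`-radical. -/
def Radical (p : ℕ) (F : PCat G) (Q : Subgroup G) : Prop :=
  SelfCentralizing F Q ∧ (pCore p ↥(FAut F Q)).map (FAut F Q).subtype = conjF Q Q

/-- `Q` is `F`-intersected. -/
def Intersected (F : PCat G) (Q : Subgroup G) : Prop :=
  SelfCentralizing F Q ∧
    conjF Q Q = ⨅ φ : ↥(F.Hom (⊤ : Subgroup G) Q), pullK φ.1 (conjF ⊤ (img φ.1))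

/-- The Alperin condition on `F`. -/
def AlperinCond (p : ℕ) (F : PCat G) : Prop :=
  ∀ Q : Subgroup G, IsEssential F Q → Radical p F Q ∧
    ∀ φ ∈ F.Hom (⊤ : Subgroup G) Q, ∀ φ' ∈ F.Hom (⊤ : Subgroup G) Q,
      ∃ σ ∈ F.Hom Q Q,
        Finsupp.single φ' (1 : ℤ) - Finsupp.single (φ.comp σ) 1 ∈ rF F Q

/-- The subgroup of `G` corresponding to a subgroup of a subgroup `N ≤ G`. -/
def liftSub {N : Subgroup G} (A : Subgroup ↥N) : Subgroup G := A.map N.subtype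

/-- The category `N_F^K(Q)` over the group `N_P^K(Q)`. -/
def NFK (F : PCat G) (Q : Subgroup G) (K : Subgroup (MulAut ↥Q)) : PCat ↥(NPK Q K) where
  Hom A B := {φ : ↥B →* ↥A | ∃ ψ ∈ F.Hom (Q ⊔ liftSub A) (Q ⊔ liftSub B), ∃ χ ∈ K,
    (∀ (x : G) (hxQ : x ∈ Q) (hx : x ∈ Q ⊔ liftSub B),
      ((ψ ⟨x, hx⟩ : ↥(Q ⊔ liftSub A)) : G) = ((χ ⟨x, hxQ⟩ : ↥Q) : G)) ∧
    (∀ (y : ↥B) (hy : ((y : ↥(NPK Q K)) : G) ∈ Q ⊔ liftSub B),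
      ((ψ ⟨((y : ↥(NPK Q K)) : G), hy⟩ : ↥(Q ⊔ liftSub A)) : G) =
        (((φ y : ↥A) : ↥(NPK Q K)) : G))}

/-- A generator family for `w_F`. -/
def GenFamily (F : PCat G) (S : ∀ Q : Subgroup G, Set (Zmod (⊤ : Subgroup G) Q)) : Prop :=
  (∀ Q : Subgroup G, Q ≠ ⊤ → S Q ⊆ (wF F Q : Set (Zmod (⊤ : Subgroup G) Q))) ∧
  ∀ Q : Subgroup G, Q ≠ ⊤ →
    wF F Q = Submodule.span ℤ {x | ∃ R : Subgroup G, R ≠ ⊤ ∧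
      ∃ a ∈ S R, ∃ φ ∈ F.Hom R Q, x = dcomp a (Finsupp.single φ (1 : ℤ))}

/-- `F^𝔛` is a partial Frobenius `P`-category. -/
def PartialFrobenius (p : ℕ) (F : PCat G) (X : Set (Subgroup G)) : Prop :=
  SylowCond p F ∧ ∀ Q ∈ X, ∀ (K : Subgroup (MulAut ↥Q)) (φ : ↥Q →* ↥(⊤ : Subgroup G)),
    φ ∈ F.Hom ⊤ Q → FullyKNormalized F (img φ) (pushK φ K) → Extensile F Q K φ

/-- The closure condition on the set of subgroups `𝔛`. -/
def XClosed (F : PCat G) (X : Set (Subgroup G)) : Prop :=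
  X.Nonempty ∧ ∀ Q : Subgroup G, (∃ R ∈ X, (F.Hom Q R).Nonempty) → Q ∈ X

/-!
Since `r_F(P) = w_F(P)`, an essential `Q` is proper, so `w_F(Q)` is spanned by the composites
`a ∘ φ` with `a ∈ S_R` and `φ ∈ F(R,Q)`, and one of them escapes `r_F(Q)`. For it `|R| ≤ |Q|`,
so the injective `φ` is an isomorphism `Q ≅ R` and `ι_R^P ∘ φ ∈ F(P,Q)` has image `R`.
Finally `a ∉ r_F(R)`, because right composition with `φ` maps `r_F(R)` into `r_F(Q)` when
`|R| = |Q|`.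
-/

noncomputable def dcompBilin {Q R T : Subgroup G} : Zmod Q R →ₗ[ℤ] Zmod R T →ₗ[ℤ] Zmod Q T :=
  Finsupp.lsum ℤ fun φ => LinearMap.toSpanSingleton ℤ _
    (Finsupp.lsum (R := ℤ) ℤ fun ψ => Finsupp.lsingle (φ.comp ψ))

lemma dcompBilin_apply {Q R T : Subgroup G} (a : Zmod Q R) (b : Zmod R T) :
    dcompBilin a b = dcomp a b := by
  simp [dcompBilin, dcomp, Finsupp.lsum_apply, Finsupp.smul_sum, Finsupp.smul_single]

lemma dcomp_single_single {Q R T : Subgroup G} (φ : ↥R →* ↥Q) (ψ : ↥T →* ↥R) (m n : ℤ) :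
    dcomp (Finsupp.single φ m) (Finsupp.single ψ n) = Finsupp.single (φ.comp ψ) (m * n) := by
  simp [dcomp]

lemma dcomp_assoc {Q R T U : Subgroup G} (a : Zmod Q R) (b : Zmod R T) (c : Zmod T U) :
    dcomp (dcomp a b) c = dcomp a (dcomp b c) := by
  simp only [← dcompBilin_apply]
  induction a using Finsupp.induction_linear with
  | zero => simp
  | add x y hx hy => simp [hx, hy]
  | single φ m =>
    induction b using Finsupp.induction_linear with
    | zero => simp
    | add x y hx hy => simp [hx, hy]
    | single ψ n =>
      induction c using Finsupp.induction_linear with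
      | zero => simp
      | add x y hx hy => simp [hx, hy]
      | single χ k =>
        simp only [dcompBilin_apply, dcomp_single_single, MonoidHom.comp_assoc, mul_assoc]

lemma linearCombination_dcomp {Q R T : Subgroup G} (a : Zmod Q R) (b : Zmod R T) :
    Finsupp.linearCombination ℤ (fun _ => (1 : ℤ)) (dcomp a b) =
      Finsupp.linearCombination ℤ (fun _ => (1 : ℤ)) a *
        Finsupp.linearCombination ℤ (fun _ => (1 : ℤ)) b := by
  simp only [← dcompBilin_apply]
  induction a using Finsupp.induction_linear with
  | zero => simp
  | add x y hx hy => simp [hx, hy, add_mul]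
  | single φ m =>
    induction b using Finsupp.induction_linear with
    | zero => simp
    | add x y hx hy => simp [hx, hy, mul_add]
    | single ψ n =>
      simp only [dcompBilin_apply, dcomp_single_single, Finsupp.linearCombination_single,
        smul_eq_mul, mul_one]

lemma dcomp_single_id {Q R : Subgroup G} (a : Zmod Q R) :
    dcomp a (Finsupp.single (MonoidHom.id ↥R) 1) = a := by
  simp only [dcomp, Finsupp.sum_single_index, mul_zero, Finsupp.single_zero, MonoidHom.comp_id,
    mul_one, Finsupp.sum_single]

namespace PCat.IsDivisible

variable {F : PCat G} (hF : F.IsDivisible)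
include hF

lemma inclusion_mem {A B : Subgroup G} (h : A ≤ B) : Subgroup.inclusion h ∈ F.Hom B A := by
  convert hF.conj_mem 1 (fun x hx => by simpa using h hx)
  ext
  simp [conjMap]

lemma dcomp_mem_ZF {A B C : Subgroup G} {a : Zmod A B} {b : Zmod B C}
    (ha : a ∈ ZF F A B) (hb : b ∈ ZF F B C) : dcomp a b ∈ ZF F A C := by
  classical
  rw [ZF, Finsupp.mem_supported] at *
  intro χ hχ
  obtain ⟨φ, hφ, hχ⟩ := Finset.mem_biUnion.mp (Finsupp.support_sum hχ)
  obtain ⟨ψ, hψ, hχ⟩ := Finset.mem_biUnion.mp (Finsupp.support_sum hχ)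
  obtain rfl := Finset.mem_singleton.mp (Finsupp.support_single_subset hχ)
  exact hF.comp_mem (ha hφ) (hb hψ)

lemma dcomp_mem_wF {R Q : Subgroup G} {a : Zmod ⊤ R} {b : Zmod R Q}
    (ha : a ∈ wF F R) (hb : b ∈ ZF F R Q) : dcomp a b ∈ wF F Q := by
  obtain ⟨haZ, haε⟩ := Submodule.mem_inf.mp ha
  refine Submodule.mem_inf.mpr ⟨hF.dcomp_mem_ZF haZ hb, ?_⟩
  rw [LinearMap.mem_ker] at haε ⊢
  rw [linearCombination_dcomp, haε, zero_mul]

lemma rF_le_wF (Q : Subgroup G) : rF F Q ≤ wF F Q := by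
  rw [rF, Submodule.span_le]
  rintro x ⟨R, -, a, ha, b, hb, rfl⟩
  exact hF.dcomp_mem_wF ha hb

lemma rF_top : rF F ⊤ = wF F ⊤ := by
  refine le_antisymm (hF.rF_le_wF ⊤) fun a ha => Submodule.subset_span ?_
  exact ⟨⊤, Or.inl rfl, a, ha, _,
    Finsupp.single_mem_supported ℤ 1 (hF.inclusion_mem le_rfl), (dcomp_single_id a).symm⟩

lemma dcomp_mem_rF {R Q : Subgroup G} (hcard : Nat.card Q ≤ Nat.card R) {b : Zmod R Q}
    (hb : b ∈ ZF F R Q) {a : Zmod ⊤ R} (ha : a ∈ rF F R) : dcomp a b ∈ rF F Q := by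
  suffices rF F R ≤ (rF F Q).comap (dcompBilin.flip b) by
    simpa [dcompBilin_apply] using this ha
  rw [rF, Submodule.span_le]
  rintro _ ⟨T, hT, c, hc, d, hd, rfl⟩
  refine Submodule.subset_span ⟨T, hT.imp_right hcard.trans_lt, c, hc, dcomp d b,
    hF.dcomp_mem_ZF hd hb, ?_⟩
  simp [dcompBilin_apply, dcomp_assoc]

end PCat.IsDivisible

lemma IsEssential.ne_top {F : PCat G} (hF : F.IsDivisible) {Q : Subgroup G}
    (hQ : IsEssential F Q) : Q ≠ ⊤ := by
  rintro rfl
  exact hQ hF.rF_top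

lemma card_le_of_dcomp_not_mem_rF {F : PCat G} {R Q : Subgroup G} {a : Zmod ⊤ R}
    {b : Zmod R Q} (ha : a ∈ wF F R) (hb : b ∈ ZF F R Q) (hab : dcomp a b ∉ rF F Q) :
    Nat.card R ≤ Nat.card Q :=
  not_lt.mp fun hlt => hab (Submodule.subset_span ⟨R, Or.inr hlt, a, ha, b, hb, rfl⟩)

lemma img_inclusion_comp {Q R T : Subgroup G} (h : R ≤ T) {φ : ↥Q →* ↥R}
    (hφ : Function.Surjective φ) : img ((Subgroup.inclusion h).comp φ) = R := by
  simp [img, MonoidHom.range_comp, MonoidHom.range_eq_top_of_surjective φ hφ,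
    ← MonoidHom.range_eq_map, h]

lemma GenFamily.exists_dcomp_not_mem_rF {F : PCat G} (hF : F.IsDivisible)
    {S : ∀ Q : Subgroup G, Set (Zmod (⊤ : Subgroup G) Q)} (hS : GenFamily F S)
    {Q : Subgroup G} (hQ : IsEssential F Q) :
    ∃ R, R ≠ ⊤ ∧ ∃ a ∈ S R, ∃ φ ∈ F.Hom R Q, dcomp a (Finsupp.single φ 1) ∉ rF F Q := by
  by_contra! h
  refine hQ (le_antisymm (hF.rF_le_wF Q) ?_)
  rw [hS.2 Q (hQ.ne_top hF), Submodule.span_le]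
  rintro _ ⟨R, hR, a, haS, φ, hφ, rfl⟩
  exact h R hR a haS φ hφ

theorem generator_family_contains_irreducible_general
    {P : Type*} [Group P] [Finite P]
    (F : PCat P) (hF : F.IsDivisible)
    (S : ∀ Q : Subgroup P, Set (Zmod (⊤ : Subgroup P) Q)) (hS : GenFamily F S)
    (Q : Subgroup P) (hQ : IsEssential F Q) :
    ∃ φ ∈ F.Hom (⊤ : Subgroup P) Q,
      ∃ a ∈ S (img φ), a ∈ wF F (img φ) ∧ a ∉ rF F (img φ) := by
  obtain ⟨R, hR, a, haS, φ, hφ, hr⟩ := hS.exists_dcomp_not_mem_rF hF hQ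
  have ha : a ∈ wF F R := hS.1 R hR haS
  have hφZ : Finsupp.single φ 1 ∈ ZF F R Q := Finsupp.single_mem_supported ℤ 1 hφ
  have hφinj : Function.Injective φ := hF.inj hφ
  have hcard : Nat.card Q ≤ Nat.card R := Nat.card_le_card_of_injective φ hφinj
  have hφbij : Function.Bijective φ := (Nat.bijective_iff_injective_and_card φ).mpr
    ⟨hφinj, hcard.antisymm (card_le_of_dcomp_not_mem_rF ha hφZ hr)⟩
  refine ⟨(inclP R).comp φ, hF.comp_mem (hF.inclusion_mem le_top) hφ, ?_⟩
  rw [inclP, img_inclusion_comp le_top hφbij.2]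
  exact ⟨a, haS, ha, fun har => hr (hF.dcomp_mem_rF hcard hφZ har)⟩

/-- **Proposition 1.9** (second part): for any `F`-essential subgroup `Q` of `P` there is
`φ ∈ F(P,Q)` such that `S_{φ(Q)}` contains an `F`-irreducible element. -/
theorem generator_family_contains_irreducible
    (p : ℕ) [Fact p.Prime] {P : Type*} [Group P] [Finite P] (hP : IsPGroup p P)
    (F : PCat P) (hF : F.IsDivisible)
    (S : ∀ Q : Subgroup P, Set (Zmod (⊤ : Subgroup P) Q)) (hS : GenFamily F S)
    (Q : Subgroup P) (hQ : IsEssential F Q) :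
    ∃ φ ∈ F.Hom (⊤ : Subgroup P) Q,
      ∃ a ∈ S (img φ), a ∈ wF F (img φ) ∧ a ∉ rF F (img φ) :=
  generator_family_contains_irreducible_general F hF S hS Q hQ

end Puig
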